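/- Let T > 0, let σ : [0,T] → (0,∞) and q_S, γ_S : [0,T] → ℝ be continuous, and let r_G ≥ 0. Let G : ℝ × ℝ × [0,T] → ℝ satisfy |G(v₁;x,t) − G(v₂;x,t)| ≤ L_G |v₁ − v₂| and |G(0;x,t)| ≤ C₀ e^{|x|} for all v₁, v₂ ∈ ℝ, x ∈ ℝ, t ∈ [0,T], with constants L_G, C₀ ≥ 0. Let κ ≥ 1, K ≥ 1, and define V(x,t) = K e^{λt} (e^{κx} + e^{−κx}). If λ ≥ Λ, where Λ = (1/2)κ²‖σ‖²_{L^∞(0,T)} + κ(‖q_S − γ_S‖_{L^∞(0,T)} + (1/2)‖σ‖²_{L^∞(0,T)}) + C₀/K + L_G, then ∂(−V)/∂t(x,t) − (1/2)σ(t)² ∂²(−V)/∂x²(x,t) − (q_S(t) − γ_S(t) − (1/2)σ(t)²) ∂(−V)/∂x(x,t) + r_G (−V(x,t)) − G(−V(x,t); x, t) ≤ 0 for all (x,t) ∈ ℝ × [0,T]; that is, −V is a (classical) subsolution of the semilinear Black–Scholes equation ∂v/∂t − 𝒜(t)v + r_G v = G(v(x,t);x,t). -/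

import Mathlib

/-!
Write `V = 2K e^{λt} cosh(κx)`. Then `∂ₜV = λV`, `∂ₓₓV = κ²V` and `|∂ₓV| ≤ κV`, while the
Lipschitz and growth bounds on `G` give `-G(-V) ≤ L_G V + C₀ e^{|x|} ≤ (L_G + C₀/K) V` because
`K e^{|x|} ≤ V` for `κ ≥ 1`, `λt ≥ 0`. So the left-hand side is at most `(Λ - λ) V ≤ 0`.
-/

open Real

noncomputable def barrier (K lam kappa x t : ℝ) : ℝ :=
  2 * K * exp (lam * t) * cosh (kappa * x)

section Barrier

variable (K lam kappa : ℝ)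

lemma mul_exp_mul_exp_add_exp_eq_barrier (x t : ℝ) :
    K * exp (lam * t) * (exp (kappa * x) + exp (-(kappa * x))) = barrier K lam kappa x t := by
  rw [barrier, cosh_eq]; ring

lemma hasDerivAt_barrier_time (x t : ℝ) :
    HasDerivAt (barrier K lam kappa x) (lam * barrier K lam kappa x t) t := by
  have h := (((hasDerivAt_id' t).const_mul lam).exp.const_mul (2 * K)).mul_const (cosh (kappa * x))
  exact h.congr_deriv (by rw [barrier]; ring)

lemma hasDerivAt_barrier_space (x t : ℝ) :
    HasDerivAt (fun y ↦ barrier K lam kappa y t)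
      (2 * K * exp (lam * t) * kappa * sinh (kappa * x)) x := by
  have h := ((hasDerivAt_id' x).const_mul kappa).cosh.const_mul (2 * K * exp (lam * t))
  exact h.congr_deriv (by ring)

lemma deriv_deriv_barrier_space (x t : ℝ) :
    deriv (fun y ↦ deriv (fun z ↦ barrier K lam kappa z t) y) x
      = kappa ^ 2 * barrier K lam kappa x t := by
  simp only [fun y ↦ (hasDerivAt_barrier_space K lam kappa y t).deriv]
  have h := ((hasDerivAt_id' x).const_mul kappa).sinh.const_mul (2 * K * exp (lam * t) * kappa)
  rw [h.deriv, barrier]; ring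

end Barrier

lemma barrier_pos {K : ℝ} (hK : 0 < K) (lam kappa x t : ℝ) : 0 < barrier K lam kappa x t := by
  unfold barrier; positivity

lemma abs_deriv_barrier_space_le {K kappa : ℝ} (hK : 0 ≤ K) (hkappa : 0 ≤ kappa) (lam x t : ℝ) :
    |deriv (fun y ↦ barrier K lam kappa y t) x| ≤ kappa * barrier K lam kappa x t := by
  have hc : 0 ≤ 2 * K * exp (lam * t) * kappa := by positivity
  have hsinh : |sinh (kappa * x)| ≤ cosh (kappa * x) := by
    rw [abs_sinh, ← cosh_abs]; exact (sinh_lt_cosh _).le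
  rw [(hasDerivAt_barrier_space K lam kappa x t).deriv, abs_mul, abs_of_nonneg hc, barrier]
  nlinarith

lemma mul_exp_abs_le_barrier {K kappa lam t : ℝ} (hK : 0 ≤ K) (hkappa : 1 ≤ kappa)
    (hlamt : 0 ≤ lam * t) (x : ℝ) : K * exp |x| ≤ barrier K lam kappa x t := by
  have hexp : exp |x| ≤ 2 * cosh (kappa * x) :=
    calc exp |x| ≤ exp |kappa * x| := by
          rw [exp_le_exp, abs_mul, abs_of_nonneg (by linarith : 0 ≤ kappa)]
          exact le_mul_of_one_le_left (abs_nonneg x) hkappa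
      _ ≤ 2 * cosh (kappa * x) := by
          rw [← cosh_abs, cosh_eq]; linarith [exp_pos (-|kappa * x|)]
  calc K * exp |x| ≤ K * (exp (lam * t) * (2 * cosh (kappa * x))) := by
        gcongr; exact hexp.trans (le_mul_of_one_le_left (by positivity) (one_le_exp hlamt))
    _ = barrier K lam kappa x t := by rw [barrier]; ring

lemma neg_apply_neg_le {g : ℝ → ℝ} {L B w : ℝ} (hg : ∀ v₁ v₂, |g v₁ - g v₂| ≤ L * |v₁ - v₂|)
    (h0 : |g 0| ≤ B) (hw : 0 ≤ w) : -g (-w) ≤ L * w + B := by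
  have h := hg (-w) 0
  rw [sub_zero, abs_neg, abs_of_nonneg hw] at h
  linarith [neg_le_abs (g (-w) - g 0), neg_abs_le (g 0)]

lemma mul_le_mul_of_abs_le_of_abs_le {a b A B : ℝ} (ha : |a| ≤ A) (hb : |b| ≤ B) :
    a * b ≤ A * B :=
  (le_abs_self _).trans (abs_mul a b ▸ mul_le_mul ha hb (abs_nonneg b) ((abs_nonneg a).trans ha))

lemma abs_sub_half_sq_le {a s A S : ℝ} (ha : |a| ≤ A) (hs : |s| ≤ S) :
    |a - 1 / 2 * s ^ 2| ≤ A + 1 / 2 * S ^ 2 := by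
  have hs2 : s ^ 2 ≤ S ^ 2 := sq_le_sq' (neg_le_of_abs_le hs) (le_of_abs_le hs)
  calc |a - 1 / 2 * s ^ 2| ≤ |a| + |1 / 2 * s ^ 2| := abs_sub _ _
    _ ≤ A + 1 / 2 * S ^ 2 := by
        rw [abs_of_nonneg (by positivity : (0 : ℝ) ≤ 1 / 2 * s ^ 2)]; linarith

theorem stmt_7_general (T : ℝ) (sigma qS gammaS : ℝ → ℝ)
    (rG : ℝ) (hrG : 0 ≤ rG)
    (G : ℝ → ℝ → ℝ → ℝ) (LG C0 : ℝ) (hLG : 0 ≤ LG) (hC0 : 0 ≤ C0)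
    (hGlip : ∀ v₁ v₂ x : ℝ, ∀ t ∈ Set.Icc (0:ℝ) T,
      |G v₁ x t - G v₂ x t| ≤ LG * |v₁ - v₂|)
    (hG0 : ∀ x : ℝ, ∀ t ∈ Set.Icc (0:ℝ) T, |G 0 x t| ≤ C0 * Real.exp |x|)
    (kappa K lam Msigma Mq : ℝ) (hkappa : 1 ≤ kappa) (hK : 1 ≤ K)
    -- `Msigma = ‖σ‖_{L^∞(0,T)}`, `Mq = ‖q_S − γ_S‖_{L^∞(0,T)}`
    (hMsigma : IsGreatest ((fun t => |sigma t|) '' Set.Icc 0 T) Msigma)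
    (hMq : IsGreatest ((fun t => |qS t - gammaS t|) '' Set.Icc 0 T) Mq)
    (hlam : lam ≥ (1/2) * kappa ^ 2 * Msigma ^ 2
        + kappa * (Mq + (1/2) * Msigma ^ 2) + C0 / K + LG)
    (V : ℝ → ℝ → ℝ)
    (hV : ∀ x t : ℝ, V x t = K * Real.exp (lam * t)
        * (Real.exp (kappa * x) + Real.exp (-(kappa * x)))) :
    ∀ x : ℝ, ∀ t ∈ Set.Icc (0:ℝ) T,
      deriv (fun s => -V x s) t
        - (1/2) * (sigma t) ^ 2 * deriv (fun y => deriv (fun z => -V z t) y) x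
        - (qS t - gammaS t - (1/2) * (sigma t) ^ 2) * deriv (fun y => -V y t) x
        + rG * (-V x t) - G (-V x t) x t ≤ 0 := by
  intro x t ht
  obtain rfl : V = barrier K lam kappa := by
    ext x t; rw [hV, mul_exp_mul_exp_add_exp_eq_barrier]
  simp only [deriv.fun_neg, (hasDerivAt_barrier_time K lam kappa x t).deriv,
    deriv_deriv_barrier_space]
  set W := barrier K lam kappa x t
  set D := deriv (fun y ↦ barrier K lam kappa y t) x
  have hK0 : 0 < K := one_pos.trans_le hK
  have hW : 0 < W := barrier_pos hK0 lam kappa x t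
  have hMq0 : 0 ≤ Mq := by obtain ⟨s, -, rfl⟩ := hMq.1; exact abs_nonneg _
  have hlam0 : 0 ≤ lam := by
    have : 0 ≤ C0 / K := by positivity
    nlinarith [sq_nonneg Msigma, sq_nonneg kappa]
  have hsigma : |sigma t| ≤ Msigma := hMsigma.2 ⟨t, ht, rfl⟩
  have hdiffusion : sigma t ^ 2 ≤ Msigma ^ 2 :=
    sq_le_sq' (neg_le_of_abs_le hsigma) (le_of_abs_le hsigma)
  have hdrift : (qS t - gammaS t - 1 / 2 * sigma t ^ 2) * D
      ≤ (Mq + 1 / 2 * Msigma ^ 2) * (kappa * W) :=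
    mul_le_mul_of_abs_le_of_abs_le (abs_sub_half_sq_le (hMq.2 ⟨t, ht, rfl⟩) hsigma)
      (abs_deriv_barrier_space_le hK0.le (by linarith) lam x t)
  have hgrowth : C0 * exp |x| ≤ C0 / K * W :=
    calc C0 * exp |x| = C0 / K * (K * exp |x|) := by field_simp
      _ ≤ C0 / K * W := by
          gcongr; exact mul_exp_abs_le_barrier hK0.le hkappa (mul_nonneg hlam0 ht.1) x
  have hsource : -G (-W) x t ≤ LG * W + C0 / K * W :=
    neg_apply_neg_le (fun v₁ v₂ ↦ hGlip v₁ v₂ x t ht) ((hG0 x t ht).trans hgrowth) hW.le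
  linarith [mul_le_mul_of_nonneg_right hlam hW.le, mul_nonneg hrG hW.le,
    mul_le_mul_of_nonneg_right hdiffusion (by positivity : 0 ≤ kappa ^ 2 * W)]

/-- `−V(x,t)`, with `V(x,t) = K e^{λt}(e^{κx} + e^{−κx})` and `λ ≥ Λ`, is a classical subsolution
of the semilinear Black–Scholes equation `∂v/∂t − 𝒜(t)v + r_G v = G(v;x,t)`. -/
theorem stmt_7 (T : ℝ) (hT : 0 < T) (sigma qS gammaS : ℝ → ℝ)
    (hsigmac : ContinuousOn sigma (Set.Icc 0 T))
    (hsigmapos : ∀ t ∈ Set.Icc (0:ℝ) T, 0 < sigma t)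
    (hqc : ContinuousOn qS (Set.Icc 0 T)) (hgc : ContinuousOn gammaS (Set.Icc 0 T))
    (rG : ℝ) (hrG : 0 ≤ rG)
    (G : ℝ → ℝ → ℝ → ℝ) (LG C0 : ℝ) (hLG : 0 ≤ LG) (hC0 : 0 ≤ C0)
    (hGlip : ∀ v₁ v₂ x : ℝ, ∀ t ∈ Set.Icc (0:ℝ) T,
      |G v₁ x t - G v₂ x t| ≤ LG * |v₁ - v₂|)
    (hG0 : ∀ x : ℝ, ∀ t ∈ Set.Icc (0:ℝ) T, |G 0 x t| ≤ C0 * Real.exp |x|)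
    (kappa K lam Msigma Mq : ℝ) (hkappa : 1 ≤ kappa) (hK : 1 ≤ K)
    -- `Msigma = ‖σ‖_{L^∞(0,T)}`, `Mq = ‖q_S − γ_S‖_{L^∞(0,T)}`
    (hMsigma : IsGreatest ((fun t => |sigma t|) '' Set.Icc 0 T) Msigma)
    (hMq : IsGreatest ((fun t => |qS t - gammaS t|) '' Set.Icc 0 T) Mq)
    (hlam : lam ≥ (1/2) * kappa ^ 2 * Msigma ^ 2
        + kappa * (Mq + (1/2) * Msigma ^ 2) + C0 / K + LG)
    (V : ℝ → ℝ → ℝ)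
    (hV : ∀ x t : ℝ, V x t = K * Real.exp (lam * t)
        * (Real.exp (kappa * x) + Real.exp (-(kappa * x)))) :
    ∀ x : ℝ, ∀ t ∈ Set.Icc (0:ℝ) T,
      deriv (fun s => -V x s) t
        - (1/2) * (sigma t) ^ 2 * deriv (fun y => deriv (fun z => -V z t) y) x
        - (qS t - gammaS t - (1/2) * (sigma t) ^ 2) * deriv (fun y => -V y t) x
        + rG * (-V x t) - G (-V x t) x t ≤ 0 :=
  stmt_7_general T sigma qS gammaS rG hrG G LG C0 hLG hC0 hGlip hG0 kappa K lam Msigma Mq hkappa hK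
    hMsigma hMq hlam V hV
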